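/- Let D = D₁ + iD₂ ∈ sp(n,ℂ) (D₁, D₂ real matrices) be semisimple with spec D ⊂ ℝ. Then the real quadratic form v ↦ Re Q_D(v,v) on ℝ^{2n} is semi-definite (i.e. everywhere ≥ 0 or everywhere ≤ 0) if and only if D₁ = 0. -/

import Mathlib

open MeasureTheory Complex Matrix

noncomputable section

/-- Index type for `2n`-dimensional (symplectic) vectors: `X`-coordinates `inl j`,
`Y`-coordinates `inr j`. -/
abbrev Idx (n : ℕ) := Fin n ⊕ Fin n

/-- The standard symplectic matrix `J = [[0, I],[-I, 0]]` over `ℂ`. -/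
def Jmat (n : ℕ) : Matrix (Idx n) (Idx n) ℂ := Matrix.fromBlocks 0 1 (-1) 0

/-- The standard symplectic matrix `J = [[0, I],[-I, 0]]` over `ℝ`. -/
def JmatR (n : ℕ) : Matrix (Idx n) (Idx n) ℝ := Matrix.fromBlocks 0 1 (-1) 0

/-- The standard symplectic form `σ(z,w) = ᵗz J w` on `ℂ^{2n}`. -/
def sigmaC (n : ℕ) (z w : Idx n → ℂ) : ℂ := z ⬝ᵥ (Jmat n).mulVec w

/-- The standard symplectic form on `ℝ^{2n}`. -/
def sigmaR (n : ℕ) (v w : Idx n → ℝ) : ℝ := v ⬝ᵥ (JmatR n).mulVec w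

/-- Inclusion of real vectors into `ℂ^{2n}`. -/
def realVec (n : ℕ) (v : Idx n → ℝ) : Idx n → ℂ := fun i => (v i : ℂ)

/-- Complex conjugation on `ℂ^{2n}` relative to the real form `ℝ^{2n}`. -/
def conjVec (n : ℕ) (z : Idx n → ℂ) : Idx n → ℂ := fun i => (starRingEnd ℂ) (z i)

/-- `S ∈ sp(n, ℂ)`, i.e. `σ(Sz, w) + σ(z, Sw) = 0` for all `z, w`. -/
def InSp (n : ℕ) (S : Matrix (Idx n) (Idx n) ℂ) : Prop := Sᵀ * Jmat n + Jmat n * S = 0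

/-- `Re Q_S ≥ 0`: the real part of the quadratic form `Q_S(v) = σ(v, Sv)` is
positive semi-definite on `ℝ^{2n}`. -/
def RePosQ (n : ℕ) (S : Matrix (Idx n) (Idx n) ℂ) : Prop :=
  ∀ v : Idx n → ℝ, 0 ≤ (sigmaC n (realVec n v) (S.mulVec (realVec n v))).re

/-- The generalized eigenspace `V_μ` of the matrix `S` for the eigenvalue `μ`. -/
def genEig (n : ℕ) (S : Matrix (Idx n) (Idx n) ℂ) (μ : ℂ) : Submodule ℂ (Idx n → ℂ) :=
  Module.End.maxGenEigenspace (Matrix.mulVecLin S) μ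

/-- `V_r`: the sum of the generalized eigenspaces of `S` for real eigenvalues. -/
def Vreal (n : ℕ) (S : Matrix (Idx n) (Idx n) ℂ) : Submodule ℂ (Idx n → ℂ) :=
  ⨆ lam : ℝ, genEig n S (lam : ℂ)

/-- `V_i`: the sum of the generalized eigenspaces of `S` for non-real eigenvalues. -/
def Vimag (n : ℕ) (S : Matrix (Idx n) (Idx n) ℂ) : Submodule ℂ (Idx n → ℂ) :=
  ⨆ μ : {z : ℂ // z.im ≠ 0}, genEig n S (μ : ℂ)

/-- `Sr` is the "real part" `S_r` of `S`: it agrees with `S` on `V_r` and vanishes on `V_i`. -/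
def IsRealPart (n : ℕ) (S Sr : Matrix (Idx n) (Idx n) ℂ) : Prop :=
  (∀ v ∈ Vreal n S, Sr.mulVec v = S.mulVec v) ∧ ∀ v ∈ Vimag n S, Sr.mulVec v = 0

/-- `Si` is the "imaginary part" `S_i` of `S`: it vanishes on `V_r` and agrees with `S`
on `V_i`. -/
def IsImagPart (n : ℕ) (S Si : Matrix (Idx n) (Idx n) ℂ) : Prop :=
  (∀ v ∈ Vreal n S, Si.mulVec v = 0) ∧ ∀ v ∈ Vimag n S, Si.mulVec v = S.mulVec v

/-- Condition (R): `V_λ ⊕ V_{−λ}` is invariant under complex conjugation for every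
real `λ ≠ 0`. -/
def CondR (n : ℕ) (S : Matrix (Idx n) (Idx n) ℂ) : Prop :=
  ∀ lam : ℝ, lam ≠ 0 →
    ∀ z ∈ genEig n S (lam : ℂ) ⊔ genEig n S (-(lam : ℂ)),
      conjVec n z ∈ genEig n S (lam : ℂ) ⊔ genEig n S (-(lam : ℂ))

/-- `ν = Σ_j ν_j`: the sum of the imaginary parts of the eigenvalues of `S` lying in the
upper half plane, counted with multiplicity. -/
def nuTotal (n : ℕ) (S : Matrix (Idx n) (Idx n) ℂ) : ℝ :=
  (S.charpoly.roots.map (fun z => max z.im 0)).sum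

/-- `S_i ≠ 0`, i.e. `S` has at least one non-real eigenvalue. -/
def HasNonrealEig (n : ℕ) (S : Matrix (Idx n) (Idx n) ℂ) : Prop :=
  ∃ z ∈ S.charpoly.roots, z.im ≠ 0

/-- Semisimple (= diagonalizable over `ℂ`) matrix. -/
def IsSemisimpleMat (n : ℕ) (D : Matrix (Idx n) (Idx n) ℂ) : Prop :=
  ∃ (P : Matrix (Idx n) (Idx n) ℂ) (d : Idx n → ℂ), IsUnit P ∧ D = P * Matrix.diagonal d * P⁻¹

/-- `S = D + N` is the Jordan decomposition of `S`: `D` semisimple, `N` nilpotent,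
`DN = ND`. -/
def IsJordanDecomp (n : ℕ) (S D N : Matrix (Idx n) (Idx n) ℂ) : Prop :=
  S = D + N ∧ IsSemisimpleMat n D ∧ IsNilpotent N ∧ D * N = N * D


namespace St10Aux

variable {m : Type*} [Fintype m] [DecidableEq m]

lemma re_form (M : Matrix m m ℂ) (x y : m → ℝ) :
    ((fun i => (x i : ℂ)) ⬝ᵥ M.mulVec (fun i => (y i : ℂ))).re
      = x ⬝ᵥ (M.map Complex.re).mulVec y := by
  simp [dotProduct, mulVec, Complex.re_sum, Finset.mul_sum]

lemma herm_split (M : Matrix m m ℂ) (hM : Mᵀ = M) (z : m → ℂ) :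
    ((star z) ⬝ᵥ M.mulVec z).re
      = (fun i => (z i).re) ⬝ᵥ (M.map Complex.re).mulVec (fun i => (z i).re)
        + (fun i => (z i).im) ⬝ᵥ (M.map Complex.re).mulVec (fun i => (z i).im) := by
  set x : m → ℝ := fun i => (z i).re
  set y : m → ℝ := fun i => (z i).im
  have hz : z = (fun i => (x i : ℂ)) + Complex.I • (fun i => (y i : ℂ)) := by
    funext i; simp [x, y, Complex.ext_iff]
  have hsz : star z = (fun i => (x i : ℂ)) - Complex.I • (fun i => (y i : ℂ)) := by
    funext i; simp [x, y, Complex.ext_iff]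
  have hsymm : ∀ a b : m → ℂ, a ⬝ᵥ M.mulVec b = b ⬝ᵥ M.mulVec a := by
    intro a b
    rw [Matrix.dotProduct_mulVec, ← Matrix.mulVec_transpose, hM, dotProduct_comm]
  rw [hsz]
  conv_lhs => rw [hz]
  rw [Matrix.mulVec_add, Matrix.mulVec_smul, sub_dotProduct, dotProduct_add,
    dotProduct_add, smul_dotProduct, smul_dotProduct,
    dotProduct_smul, dotProduct_smul]
  have hc := hsymm (fun i => (x i : ℂ)) (fun i => (y i : ℂ))
  rw [← re_form, ← re_form]
  simp only [smul_eq_mul]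
  rw [hc]
  simp [Complex.add_re, Complex.sub_re, Complex.mul_re]
  ring

lemma skew_re (J : Matrix m m ℂ) (hJ : Jᴴ = -J) (z : m → ℂ) :
    ((star z) ⬝ᵥ J.mulVec z).re = 0 := by
  have h : star ((star z) ⬝ᵥ J.mulVec z) = -((star z) ⬝ᵥ J.mulVec z) := by
    calc star ((star z) ⬝ᵥ J.mulVec z) = star (J.mulVec z) ⬝ᵥ z := by
          rw [star_dotProduct, star_star]
      _ = (star z ᵥ* Jᴴ) ⬝ᵥ z := by rw [Matrix.star_mulVec]
      _ = -((star z ᵥ* J) ⬝ᵥ z) := by rw [hJ, Matrix.vecMul_neg, neg_dotProduct]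
      _ = -((star z) ⬝ᵥ J.mulVec z) := by rw [← Matrix.dotProduct_mulVec]
  have := congrArg Complex.re h
  simp at this
  linarith [this]

lemma eig_root (A : Matrix m m ℂ) (μ : ℂ) (z : m → ℂ) (hz : z ≠ 0)
    (h : A.mulVec z = μ • z) : μ ∈ A.charpoly.roots := by
  have hdet : ((Matrix.scalar m μ) - A).det = 0 := by
    rw [← Matrix.exists_mulVec_eq_zero_iff]
    exact ⟨z, hz, by simp [Matrix.sub_mulVec, h, Matrix.smul_mulVec]⟩
  have heval : A.charpoly.eval μ = 0 := by
    rw [Matrix.charpoly, eval_det, Matrix.matPolyEquiv_charmatrix]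
    simpa using hdet
  rw [Polynomial.mem_roots (A.charpoly_monic.ne_zero)]
  exact heval

lemma map_re_real_mul (A : Matrix m m ℝ) (D : Matrix m m ℂ) :
    ((A.map (fun x => (x : ℂ))) * D).map Complex.re = A * (D.map Complex.re) := by
  ext i j
  simp [Matrix.mul_apply, Complex.re_sum]

lemma mulVec_map_real (A : Matrix m m ℝ) (x : m → ℝ) :
    (A.map (fun r => (r : ℂ))).mulVec (fun i => (x i : ℂ))
      = fun i => ((A.mulVec x i : ℝ) : ℂ) := by
  funext i
  simp [mulVec, dotProduct]

end St10Aux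

lemma Jmat_eq_map (n : ℕ) : Jmat n = (JmatR n).map (fun x => (x : ℂ)) := by
  ext (i|i) (j|j) <;>
    simp [Jmat, JmatR, Matrix.fromBlocks, Matrix.one_apply] <;> split <;> simp

lemma Jmat_transpose (n : ℕ) : (Jmat n)ᵀ = -(Jmat n) := by
  simp [Jmat, Matrix.fromBlocks_transpose, Matrix.fromBlocks_neg]

lemma Jmat_conjTranspose (n : ℕ) : (Jmat n)ᴴ = -(Jmat n) := by
  have hstar : ∀ i j, star (Jmat n i j) = Jmat n i j := by
    intro i j
    rw [Jmat_eq_map]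
    simp [Matrix.map_apply]
  calc (Jmat n)ᴴ = (Jmat n)ᵀ := by
        ext i j; rw [Matrix.conjTranspose_apply, hstar, Matrix.transpose_apply]
    _ = -(Jmat n) := Jmat_transpose n

lemma JmatR_sq (n : ℕ) : JmatR n * JmatR n = -1 := by
  rw [JmatR, Matrix.fromBlocks_multiply, ← Matrix.fromBlocks_one, Matrix.fromBlocks_neg]
  norm_num

/-- let `D ∈ sp(n,ℂ)` be semisimple with real spectrum. Then the real
quadratic form `v ↦ Re Q_D(v,v)` on `ℝ^{2n}` is semi-definite iff `D₁ = Re D = 0`. -/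
theorem statement10 (n : ℕ) (D : Matrix (Idx n) (Idx n) ℂ)
    (hD : InSp n D) (hss : IsSemisimpleMat n D)
    (hreal : ∀ z ∈ D.charpoly.roots, z.im = 0) :
    ((∀ v : Idx n → ℝ, 0 ≤ (sigmaC n (realVec n v) (D.mulVec (realVec n v))).re) ∨
        (∀ v : Idx n → ℝ, (sigmaC n (realVec n v) (D.mulVec (realVec n v))).re ≤ 0)) ↔
      D.map Complex.re = 0 := by
  -- notation
  set M : Matrix (Idx n) (Idx n) ℂ := Jmat n * D with hMdef
  set M₁ : Matrix (Idx n) (Idx n) ℝ := M.map Complex.re with hM₁def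
  have hM₁eq : M₁ = JmatR n * (D.map Complex.re) := by
    rw [hM₁def, hMdef, Jmat_eq_map, St10Aux.map_re_real_mul]
  -- the real quadratic form
  have hform : ∀ v : Idx n → ℝ,
      (sigmaC n (realVec n v) (D.mulVec (realVec n v))).re = v ⬝ᵥ M₁.mulVec v := by
    intro v
    rw [sigmaC, Matrix.mulVec_mulVec, hM₁def, ← St10Aux.re_form]
    rfl
  -- symmetry of M
  have hD' : Dᵀ * Jmat n + Jmat n * D = 0 := hD
  have hMsymm : Mᵀ = M := by
    rw [hMdef, Matrix.transpose_mul, Jmat_transpose, Matrix.mul_neg]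
    have h1 : Dᵀ * Jmat n = -(Jmat n * D) := by
      rw [← add_eq_zero_iff_eq_neg]; exact hD'
    rw [h1, neg_neg]
  have hM₁symm : M₁ᵀ = M₁ := by
    rw [hM₁def, ← Matrix.transpose_map, hMsymm]
  constructor
  · -- hard direction
    intro hsemi
    -- eigen-structure
    obtain ⟨P, d, hP, hDP⟩ := hss
    have hPd : IsUnit P.det := (Matrix.isUnit_iff_isUnit_det P).mp hP
    have hDPP : D * P = P * Matrix.diagonal d := by
      rw [hDP, Matrix.mul_assoc, Matrix.mul_assoc, Matrix.nonsing_inv_mul _ hPd, Matrix.mul_one]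
    set z : Idx n → (Idx n → ℂ) := fun j => P.mulVec (Pi.single j 1) with hzdef
    have hzero : ∀ j, z j ≠ 0 := by
      intro j hzj
      have h1 : P⁻¹.mulVec (P.mulVec (Pi.single j 1)) = 0 := by
        rw [show P.mulVec (Pi.single j 1) = z j from rfl, hzj, Matrix.mulVec_zero]
      rw [Matrix.mulVec_mulVec, Matrix.nonsing_inv_mul _ hPd, Matrix.one_mulVec] at h1
      have := congrFun h1 j
      simp at this
    have heig : ∀ j, D.mulVec (z j) = d j • z j := by
      intro j
      show D.mulVec (P.mulVec (Pi.single j 1)) = d j • P.mulVec (Pi.single j 1)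
      rw [Matrix.mulVec_mulVec, hDPP, ← Matrix.mulVec_mulVec, Matrix.diagonal_mulVec_single]
      have hsing : Pi.single j (d j * 1) = (d j) • (Pi.single j 1 : Idx n → ℂ) := by
        funext i
        by_cases h : i = j <;> simp [Pi.single_apply, h]
      rw [hsing, Matrix.mulVec_smul]
    have hdreal : ∀ j, (d j).im = 0 := fun j =>
      hreal _ (St10Aux.eig_root D (d j) (z j) (hzero j) (heig j))
    -- the hermitian form vanishes on eigenvectors
    have hH : ∀ j, ((star (z j)) ⬝ᵥ M.mulVec (z j)).re = 0 := by
      intro j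
      rw [hMdef, ← Matrix.mulVec_mulVec, heig, Matrix.mulVec_smul, dotProduct_smul]
      have hskew := St10Aux.skew_re (Jmat n) (Jmat_conjTranspose n) (z j)
      rw [smul_eq_mul, Complex.mul_re, hskew, hdreal]
      ring
    -- extract a PSD matrix N
    have hN : ∃ N : Matrix (Idx n) (Idx n) ℝ, N.PosSemidef ∧
        (∀ w, N.mulVec w = 0 → M₁.mulVec w = 0) ∧
        (∀ x y : Idx n → ℝ, x ⬝ᵥ M₁.mulVec x + y ⬝ᵥ M₁.mulVec y = 0 →
          x ⬝ᵥ N.mulVec x = 0 ∧ y ⬝ᵥ N.mulVec y = 0) := by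
      rcases hsemi with hpos | hneg
      · refine ⟨M₁, Matrix.posSemidef_iff_dotProduct_mulVec.mpr ⟨?_, ?_⟩, fun w h => h, ?_⟩
        · ext i j
          simp only [Matrix.conjTranspose_apply, star_trivial]
          exact congrFun (congrFun hM₁symm i) j
        · intro x
          simpa [hform x] using hpos x
        · intro x y hxy
          have hx := hpos x
          have hy := hpos y
          rw [hform] at hx hy
          constructor <;> linarith
      · refine ⟨-M₁, Matrix.posSemidef_iff_dotProduct_mulVec.mpr ⟨?_, ?_⟩,
          fun w h => by rw [Matrix.neg_mulVec] at h; exact neg_eq_zero.mp h, ?_⟩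
        · ext i j
          simp only [Matrix.conjTranspose_apply, star_trivial, Matrix.neg_apply]
          exact congrArg Neg.neg (congrFun (congrFun hM₁symm i) j)
        · intro x
          have hx := hneg x
          rw [hform] at hx
          rw [Matrix.neg_mulVec, dotProduct_neg, star_trivial]
          linarith
        · intro x y hxy
          have hx := hneg x
          have hy := hneg y
          rw [hform] at hx hy
          constructor <;> · rw [Matrix.neg_mulVec, dotProduct_neg]; linarith
    obtain ⟨N, hNps, hNker, hNzero⟩ := hN
    -- M₁ kills real and imaginary parts of each eigenvector
    have hcol : ∀ j, (M₁.map (fun r => (r : ℂ))).mulVec (z j) = 0 := by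
      intro j
      have hsplit := St10Aux.herm_split M hMsymm (z j)
      rw [hH j, ← hM₁def] at hsplit
      obtain ⟨hx0, hy0⟩ := hNzero _ _ hsplit.symm
      have hx : M₁.mulVec (fun i => (z j i).re) = 0 := by
        apply hNker
        rw [← hNps.dotProduct_mulVec_zero_iff]
        simpa using hx0
      have hy : M₁.mulVec (fun i => (z j i).im) = 0 := by
        apply hNker
        rw [← hNps.dotProduct_mulVec_zero_iff]
        simpa using hy0
      have hzsplit : z j = (fun i => ((z j i).re : ℂ))
          + Complex.I • (fun i => ((z j i).im : ℂ)) := by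
        funext i; simp [Complex.ext_iff]
      rw [hzsplit, Matrix.mulVec_add, Matrix.mulVec_smul,
        St10Aux.mulVec_map_real, St10Aux.mulVec_map_real, hx, hy]
      funext i
      simp
    -- hence M₁ = 0
    have hMcP : (M₁.map (fun r => (r : ℂ))) * P = 0 := by
      ext i j
      have := congrFun (hcol j) i
      rw [hzdef, Matrix.mulVec_mulVec] at this
      simpa [Matrix.mulVec_single] using this
    have hMc : (M₁.map (fun r => (r : ℂ))) = 0 := by
      calc (M₁.map (fun r => (r : ℂ)))
          = (M₁.map (fun r => (r : ℂ))) * (P * P⁻¹) := by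
            rw [Matrix.mul_nonsing_inv _ hPd, Matrix.mul_one]
        _ = ((M₁.map (fun r => (r : ℂ))) * P) * P⁻¹ := by rw [Matrix.mul_assoc]
        _ = 0 := by rw [hMcP, Matrix.zero_mul]
    have hM₁0 : M₁ = 0 := by
      ext i j
      have := congrFun (congrFun hMc i) j
      simpa [Matrix.map_apply] using this
    -- conclude D.map re = 0
    have := congrArg (fun A => JmatR n * A) (hM₁eq.symm.trans hM₁0)
    simp only [← Matrix.mul_assoc, JmatR_sq, Matrix.mul_zero] at this
    rw [Matrix.neg_mul, Matrix.one_mul] at this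
    exact neg_eq_zero.mp this
  · -- easy direction
    intro h0
    left
    intro v
    rw [hform, hM₁eq, h0, Matrix.mul_zero]
    simp
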